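/- If λ^1 = 0, λ^{m+1} = max(λ^m + ω D^m, 0), |D^m| ≤ B for all m, and λ^m ≤ Λ for all m ≤ M, then the cumulative constraint violation satisfies (Σ_{m=1}^M D^m)_+ ≤ sqrt(2ΛBM/ω + B^2 M), i.e., it is O(√M) when Λ = O(1/ω) and ω = Θ(1/√M). -/
import Mathlib


/-- Cumulative constraint-violation bound: the positive part of `Σ_{m=1}^M D^m`
is at most `sqrt(2ΛBM/ω + B²M)`. -/
theorem ucb_dual_violation_bound
    (ω B Λ : ℝ) (hω : 0 < ω) (hB : 0 ≤ B) (hΛ : 0 ≤ Λ)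
    (D lam : ℕ → ℝ) (M : ℕ)
    (hinit : lam 1 = 0)
    (hupd : ∀ m, lam (m + 1) = max (lam m + ω * D m) 0)
    (hD : ∀ m, |D m| ≤ B)
    (hlam : ∀ m ≤ M, lam m ≤ Λ) :
    max (∑ m ∈ Finset.Icc 1 M, D m) 0 ≤
      Real.sqrt (2 * Λ * B * M / ω + B ^ 2 * M) := by
  -- nonnegativity of lam for m ≥ 1
  have hnn : ∀ m, 1 ≤ m → 0 ≤ lam m := by
    intro m hm
    rcases Nat.exists_eq_add_of_le hm with ⟨k, rfl⟩
    cases k with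
    | zero => simp [hinit]
    | succ k => rw [show 1 + (k+1) = (1+k) + 1 by ring, hupd]; exact le_max_right _ _
  -- lower bound: lam (M+1) ≥ ω * Σ D
  have hlow : ∀ N, ω * ∑ m ∈ Finset.Icc 1 N, D m ≤ lam (N + 1) := by
    intro N
    induction N with
    | zero => simp [hinit]
    | succ N ih =>
      rw [Finset.sum_Icc_succ_top (by omega : 1 ≤ N + 1), mul_add]
      calc ω * ∑ m ∈ Finset.Icc 1 N, D m + ω * D (N+1)
          ≤ lam (N+1) + ω * D (N+1) := by linarith
        _ ≤ lam (N+1+1) := by rw [hupd (N+1)]; exact le_max_left _ _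
  -- squared telescoping bound
  have hsq : ∀ N, (lam (N + 1)) ^ 2 ≤
      ∑ m ∈ Finset.Icc 1 N, (2 * ω * lam m * D m + ω ^ 2 * (D m) ^ 2) := by
    intro N
    induction N with
    | zero => simp [hinit]
    | succ N ih =>
      rw [Finset.sum_Icc_succ_top (by omega : 1 ≤ N + 1)]
      have h1 : (lam (N + 1 + 1)) ^ 2 ≤ (lam (N+1) + ω * D (N+1)) ^ 2 := by
        rw [hupd (N+1)]
        rcases le_or_gt 0 (lam (N+1) + ω * D (N+1)) with h | h
        · rw [max_eq_left h]
        · rw [max_eq_right h.le]; simpa using sq_nonneg (lam (N+1) + ω * D (N+1))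
      calc (lam (N + 1 + 1)) ^ 2 ≤ (lam (N+1) + ω * D (N+1)) ^ 2 := h1
        _ = (lam (N+1))^2 + (2 * ω * lam (N+1) * D (N+1) + ω^2 * (D (N+1))^2) := by ring
        _ ≤ _ := by linarith
  -- bound each term
  have hterm : ∀ m ∈ Finset.Icc 1 M,
      2 * ω * lam m * D m + ω ^ 2 * (D m) ^ 2 ≤ 2 * ω * Λ * B + ω ^ 2 * B ^ 2 := by
    intro m hm
    simp only [Finset.mem_Icc] at hm
    have h1 : lam m * D m ≤ Λ * B := by
      calc lam m * D m ≤ lam m * |D m| := by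
            exact mul_le_mul_of_nonneg_left (le_abs_self _) (hnn m hm.1)
        _ ≤ Λ * B := mul_le_mul (hlam m hm.2) (hD m) (abs_nonneg _) hΛ
    have h2 : (D m) ^ 2 ≤ B ^ 2 := by
      rw [← sq_abs]; exact pow_le_pow_left₀ (abs_nonneg _) (hD m) 2
    nlinarith [sq_nonneg ω, hω.le]
  have hmain : (lam (M + 1)) ^ 2 ≤ (2 * ω * Λ * B + ω ^ 2 * B ^ 2) * M := by
    calc (lam (M + 1)) ^ 2 ≤ _ := hsq M
      _ ≤ ∑ _m ∈ Finset.Icc 1 M, (2 * ω * Λ * B + ω ^ 2 * B ^ 2) :=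
          Finset.sum_le_sum hterm
      _ = (2 * ω * Λ * B + ω ^ 2 * B ^ 2) * M := by
          rw [Finset.sum_const, Nat.card_Icc]; push_cast; ring
  set T := max (∑ m ∈ Finset.Icc 1 M, D m) 0 with hT
  have hT0 : 0 ≤ T := le_max_right _ _
  have hTle : ω * T ≤ lam (M + 1) := by
    rcases max_cases (∑ m ∈ Finset.Icc 1 M, D m) 0 with ⟨he, _⟩ | ⟨he, _⟩
    · rw [hT, he]; exact hlow M
    · rw [hT, he, mul_zero]; exact hnn _ (by omega)
  have hT2 : T ^ 2 ≤ 2 * Λ * B * M / ω + B ^ 2 * M := by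
    have h1 : (ω * T) ^ 2 ≤ (lam (M+1)) ^ 2 := by
      apply pow_le_pow_left₀ (by positivity) hTle
    rw [div_add' _ _ _ (ne_of_gt hω), le_div_iff₀ hω]
    nlinarith [sq_nonneg ω]
  calc T = Real.sqrt (T ^ 2) := by rw [Real.sqrt_sq hT0]
    _ ≤ _ := Real.sqrt_le_sqrt hT2
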